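/- Let f, g ∈ L^1(ℝ) ∩ L^2(ℝ) (or ℱ^{-1}f, ℱ^{-1}g ∈ L^1([-B,B])) satisfy ℱ^{-1}f(η) · conj(ℱ^{-1}f(η-ξ)) = ℱ^{-1}g(η) · conj(ℱ^{-1}g(η-ξ)) for almost all (η,ξ) ∈ ℝ². Then there exists α ∈ ℝ such that f = e^{iα} g. -/

import Mathlib

/-!
Since `f` and `g` are integrable, `F = ℱ⁻¹f` and `G = ℱ⁻¹g` are continuous, so the almost-everywhere
identity holds everywhere: `F x · conj (F y) = G x · conj (G y)` for all `x, y`. Taking `x = y`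
gives `|F| = |G|`; fixing `y` with `F y ≠ 0` gives `F = c · G` with `c = conj (G y) / conj (F y)`
of modulus one. Injectivity of the Fourier transform on `L¹` turns this into `f = c · g` a.e.
-/

open MeasureTheory Complex Real

/-- The inverse Fourier transform `ℱ⁻¹f(η) = ∫ f(t) e^{2πitη} dt`. -/
noncomputable def invFourierT (f : ℝ → ℂ) (η : ℝ) : ℂ :=
  ∫ t : ℝ, f t * Complex.exp (2*(π:ℂ)*Complex.I*(t:ℂ)*(η:ℂ))

open scoped FourierTransform ComplexConjugate

section Fourier

variable {V E : Type*} [NormedAddCommGroup V] [InnerProductSpace ℝ V] [FiniteDimensional ℝ V]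
  [MeasurableSpace V] [BorelSpace V] [NormedAddCommGroup E] [NormedSpace ℂ E]

theorem Real.integral_fourierInv_smul_eq [CompleteSpace E] {φ : V → ℂ} {h : V → E}
    (hφ : Integrable φ) (hh : Integrable h) : ∫ x, 𝓕⁻ φ x • h x = ∫ ξ, φ ξ • 𝓕⁻ h ξ := by
  have hflip : (-innerₗ V).flip = -innerₗ V := by
    ext x y
    exact congrArg Neg.neg (real_inner_comm x y)
  have := VectorFourier.integral_fourierIntegral_smul_eq_flip (μ := volume) (ν := volume)
    (L := -innerₗ V) Real.continuous_fourierChar continuous_inner.neg hφ hh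
  rwa [hflip] at this

theorem Real.ae_eq_of_fourierInv_eq [CompleteSpace E] {f₁ f₂ : V → E} (h₁ : Integrable f₁)
    (h₂ : Integrable f₂) (h : 𝓕⁻ f₁ = 𝓕⁻ f₂) : f₁ =ᵐ[volume] f₂ := by
  refine ae_eq_of_integral_contDiff_smul_eq h₁.locallyIntegrable h₂.locallyIntegrable
    fun ψ hψ hψ_supp => ?_
  -- a real test function `ψ` is the inverse transform of the Schwartz function `φ = 𝓕 ψ`
  set φ : SchwartzMap V ℂ :=
    𝓕 ((hψ_supp.comp_left ofReal_zero).toSchwartzMap (ofRealCLM.contDiff.comp hψ))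
  have hψφ : ∀ x, (ψ x : ℂ) = 𝓕⁻ (φ : V → ℂ) x := by
    intro x
    rw [← SchwartzMap.fourierInv_coe, FourierTransform.fourierInv_fourier_eq]
    rfl
  simp_rw [← Complex.coe_smul, hψφ, Real.integral_fourierInv_smul_eq φ.integrable h₁,
    Real.integral_fourierInv_smul_eq φ.integrable h₂, h]

theorem Real.fourierInv_const_smul (c : ℂ) (f : V → E) : 𝓕⁻ (c • f) = c • 𝓕⁻ f :=
  VectorFourier.fourierIntegral_const_smul _ _ _ f c

theorem MeasureTheory.Integrable.continuous_fourierInv {f : V → E} (hf : Integrable f) :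
    Continuous (𝓕⁻ f) := by
  simpa using (Lp.fourierTransformInv (memLp_one_iff_integrable.2 hf).toLp).continuous

end Fourier

theorem invFourierT_eq_fourierInv (f : ℝ → ℂ) : invFourierT f = 𝓕⁻ f := by
  ext η
  rw [invFourierT, Real.fourierInv_eq']
  congr 1 with t
  simp only [RCLike.inner_apply, conj_trivial, smul_eq_mul]
  push_cast
  ring_nf

theorem mul_conj_eq_of_ae_mul_conj_sub_eq {V : Type*} [TopologicalSpace V] [AddCommGroup V]
    [IsTopologicalAddGroup V] [MeasurableSpace (V × V)] {μ : Measure (V × V)} [μ.IsOpenPosMeasure]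
    {F G : V → ℂ} (hF : Continuous F) (hG : Continuous G)
    (h : ∀ᵐ q ∂μ, F q.1 * conj (F (q.1 - q.2)) = G q.1 * conj (G (q.1 - q.2))) (x y : V) :
    F x * conj (F y) = G x * conj (G y) := by
  have heq := (Continuous.ae_eq_iff_eq μ (by fun_prop) (by fun_prop)).1 h
  simpa only [sub_sub_cancel] using congrFun heq (x, x - y)

theorem Complex.exists_norm_eq_one_of_mul_conj_eq {α : Type*} {F G : α → ℂ}
    (h : ∀ x y, F x * conj (F y) = G x * conj (G y)) : ∃ c : ℂ, ‖c‖ = 1 ∧ F = c • G := by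
  have hnorm : ∀ x, ‖F x‖ = ‖G x‖ := by
    intro x
    have := h x x
    rw [mul_conj', mul_conj'] at this
    exact (pow_left_inj₀ (norm_nonneg _) (norm_nonneg _) two_ne_zero).1 (mod_cast this)
  by_cases hF : ∀ x, F x = 0
  · refine ⟨1, norm_one, funext fun x => ?_⟩
    have hG : G x = 0 := norm_eq_zero.1 (by rw [← hnorm, hF, norm_zero])
    simp [hF x, hG]
  obtain ⟨y, hy⟩ := not_forall.1 hF
  have hy' : conj (F y) ≠ 0 := (map_ne_zero _).2 hy
  refine ⟨conj (G y) / conj (F y), ?_, funext fun x => ?_⟩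
  · rw [norm_div, norm_conj, norm_conj, hnorm, div_self]
    rwa [← hnorm, norm_ne_zero_iff]
  · rw [Pi.smul_apply, smul_eq_mul, div_mul_eq_mul_div, eq_div_iff hy', mul_comm _ (G x), h]

theorem stmt15_general (f g : ℝ → ℂ)
    (hf1 : Integrable f (volume : Measure ℝ))
    (hg1 : Integrable g (volume : Measure ℝ))
    (hamb : ∀ᵐ q : ℝ × ℝ ∂(volume : Measure (ℝ × ℝ)),
      invFourierT f q.1 * (starRingEnd ℂ) (invFourierT f (q.1 - q.2))
        = invFourierT g q.1 * (starRingEnd ℂ) (invFourierT g (q.1 - q.2))) :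
    ∃ α : ℝ, f =ᵐ[(volume : Measure ℝ)] fun t => Complex.exp (Complex.I * (α:ℂ)) * g t := by
  rw [invFourierT_eq_fourierInv, invFourierT_eq_fourierInv] at hamb
  obtain ⟨c, hc, hfg⟩ := exists_norm_eq_one_of_mul_conj_eq
    (mul_conj_eq_of_ae_mul_conj_sub_eq hf1.continuous_fourierInv hg1.continuous_fourierInv hamb)
  obtain ⟨α, rfl⟩ := (norm_eq_one_iff c).1 hc
  refine ⟨α, Real.ae_eq_of_fourierInv_eq hf1 (hg1.const_mul _) ?_⟩
  rw [hfg, mul_comm (α : ℂ) I, ← Real.fourierInv_const_smul]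
  rfl

theorem stmt15 (f g : ℝ → ℂ)
    (hf1 : Integrable f (volume : Measure ℝ)) (hf2 : MemLp f 2 (volume : Measure ℝ))
    (hg1 : Integrable g (volume : Measure ℝ)) (hg2 : MemLp g 2 (volume : Measure ℝ))
    (hamb : ∀ᵐ q : ℝ × ℝ ∂(volume : Measure (ℝ × ℝ)),
      invFourierT f q.1 * (starRingEnd ℂ) (invFourierT f (q.1 - q.2))
        = invFourierT g q.1 * (starRingEnd ℂ) (invFourierT g (q.1 - q.2))) :
    ∃ α : ℝ, f =ᵐ[(volume : Measure ℝ)] fun t => Complex.exp (Complex.I * (α:ℂ)) * g t :=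
  stmt15_general f g hf1 hg1 hamb
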